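/- arXiv:0710.3647 — 5 statements merged into one kernel-verified Lean document; each statement's English description precedes it below -/
import Mathlib

section
/- Let P₁ be the gamma distribution with shape α₁ > 0 and scale β₁ > 0, and P₂ the gamma distribution with shape α₂ > 0 and scale β₂ > 0. Then the Kullback–Leibler divergence satisfies D(P₁‖P₂) = α₁(β₁ − β₂)/β₂ + α₂·log(β₂/β₁) + log(Γ(α₂)/Γ(α₁)) + (α₁ − α₂)·ψ(α₁), where ψ = (log Γ)′ is the digamma function. -/
open MeasureTheory Real Set

/-- The gamma distribution with shape `α` and scale `β`: the measure on `ℝ` with density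
`x ^ (α - 1) * exp (-x / β) / (Γ α * β ^ α)` on `(0, ∞)`. -/
noncomputable def gammaDist (α β : ℝ) : Measure ℝ :=
  volume.withDensity fun x =>
    ENNReal.ofReal (if x ∈ Set.Ioi (0 : ℝ) then
      x ^ (α - 1) * Real.exp (-x / β) / (Real.Gamma α * β ^ α) else 0)

/-- Kullback–Leibler divergence `D(P‖Q) = ∫ log (dP/dQ) dP`. -/
noncomputable def klDiv (P Q : Measure ℝ) : ℝ :=
  ∫ x, Real.log (P.rnDeriv Q x).toReal ∂P

/-- The digamma function `ψ = (log Γ)′`. -/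
noncomputable def digamma (x : ℝ) : ℝ :=
  deriv (fun y => Real.log (Real.Gamma y)) x

/-! On `(0, ∞)` the log-ratio of the two gamma densities is
`(α₁ - α₂) log x + (β₂⁻¹ - β₁⁻¹) x + log (Γ(α₂) β₂ ^ α₂ / (Γ(α₁) β₁ ^ α₁))`, so the divergence is
an affine combination of the mean `α₁ β₁` and the logarithmic mean `log β₁ + ψ(α₁)` of the first
law. After rescaling to unit scale, the logarithmic mean is `Γ'(α₁) / Γ(α₁)`, because
differentiating Euler's integral under the integral sign gives
`Γ'(s) = ∫₀^∞ log t · t ^ (s - 1) e ^ (-t) dt`. -/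

lemma integrableOn_rpow_mul_exp_neg_div_Ioi {s b : ℝ} (hs : 0 < s) (hb : 0 < b) :
    IntegrableOn (fun x : ℝ => x ^ (s - 1) * exp (-x / b)) (Ioi 0) := by
  refine (integrableOn_rpow_mul_exp_neg_mul_rpow (s := s - 1) (p := 1) (by linarith)
    one_pos (inv_pos.mpr hb)).congr_fun (fun x _ => ?_) measurableSet_Ioi
  simp only [rpow_one, div_eq_inv_mul, neg_mul, mul_neg]

lemma integral_rpow_mul_exp_neg_div_Ioi {s b : ℝ} (hs : 0 < s) (hb : 0 < b) :
    ∫ x in Ioi (0 : ℝ), x ^ (s - 1) * exp (-x / b) = Gamma s * b ^ s := by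
  have h := integral_rpow_mul_exp_neg_mul_Ioi hs (inv_pos.mpr hb)
  simp only [one_div, inv_inv, ← div_eq_inv_mul, neg_div] at h ⊢
  rw [h, mul_comm]

lemma abs_log_le_rpow_add_rpow_neg {x δ : ℝ} (hx : 0 < x) (hδ : 0 < δ) :
    |log x| ≤ (x ^ δ + x ^ (-δ)) / δ := by
  have hpos := log_le_rpow_div hx.le hδ
  have hneg := log_le_rpow_div (inv_pos.mpr hx).le hδ
  rw [log_inv, inv_rpow hx.le, ← rpow_neg hx.le] at hneg
  rw [abs_le, add_div]
  constructor <;> linarith [div_nonneg (rpow_pos_of_pos hx δ).le hδ.le,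
    div_nonneg (rpow_pos_of_pos hx (-δ)).le hδ.le]

lemma integrableOn_log_mul_rpow_mul_exp_neg_div_Ioi {s b : ℝ} (hs : 0 < s) (hb : 0 < b) :
    IntegrableOn (fun x : ℝ => log x * (x ^ (s - 1) * exp (-x / b))) (Ioi 0) := by
  have hδ : 0 < s / 2 := half_pos hs
  have hdom := ((integrableOn_rpow_mul_exp_neg_div_Ioi (s := s + s / 2) (by linarith) hb).add
    (integrableOn_rpow_mul_exp_neg_div_Ioi (s := s - s / 2) (by linarith) hb)).div_const (s / 2)
  refine hdom.mono' (by fun_prop)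
    ((ae_restrict_mem measurableSet_Ioi).mono fun x (hx : 0 < x) => ?_)
  have hf : 0 ≤ x ^ (s - 1) * exp (-x / b) := by positivity
  calc ‖log x * (x ^ (s - 1) * exp (-x / b))‖ = |log x| * (x ^ (s - 1) * exp (-x / b)) := by
        rw [norm_mul, norm_of_nonneg hf, norm_eq_abs]
    _ ≤ (x ^ (s / 2) + x ^ (-(s / 2))) / (s / 2) * (x ^ (s - 1) * exp (-x / b)) :=
        mul_le_mul_of_nonneg_right (abs_log_le_rpow_add_rpow_neg hx hδ) hf
    _ = _ := by
        simp only [Pi.add_apply]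
        rw [show s + s / 2 - 1 = s / 2 + (s - 1) by ring,
          show s - s / 2 - 1 = -(s / 2) + (s - 1) by ring, rpow_add hx, rpow_add hx]
        ring

lemma hasDerivAt_Gamma_integral {s : ℝ} (hs : 0 < s) :
    HasDerivAt Gamma (∫ t in Ioi (0 : ℝ), log t * (t ^ (s - 1) * exp (-t))) s := by
  have hc := (Complex.hasDerivAt_GammaIntegral (s := s) (by simpa using hs)).real_of_complex
  have hint : (∫ t : ℝ in Ioi 0, (t : ℂ) ^ ((s : ℂ) - 1) * (log t * exp (-t))).re
      = ∫ t in Ioi (0 : ℝ), log t * (t ^ (s - 1) * exp (-t)) := by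
    rw [setIntegral_congr_fun measurableSet_Ioi
      (g := fun t => ((log t * (t ^ (s - 1) * exp (-t)) : ℝ) : ℂ)), integral_complex_ofReal,
      Complex.ofReal_re]
    intro t (ht : 0 < t)
    push_cast [Complex.ofReal_cpow ht.le]
    ring
  have hΓ : (fun x : ℝ => (Complex.GammaIntegral x).re) =ᶠ[nhds s] Gamma := by
    filter_upwards [Ioi_mem_nhds hs] with x hx
    rw [Complex.GammaIntegral_ofReal, Complex.ofReal_re, Gamma_eq_integral hx]
  exact hint ▸ hc.congr_of_eventuallyEq hΓ.symm

lemma Gamma_mul_digamma {s : ℝ} (hs : 0 < s) :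
    Gamma s * digamma s = ∫ t in Ioi (0 : ℝ), log t * (t ^ (s - 1) * exp (-t)) := by
  have hΓ := (Gamma_pos_of_pos hs).ne'
  rw [digamma, ((hasDerivAt_Gamma_integral hs).log hΓ).deriv, mul_div_cancel₀ _ hΓ]

lemma integral_log_mul_rpow_mul_exp_neg_div_Ioi {s b : ℝ} (hs : 0 < s) (hb : 0 < b) :
    ∫ x in Ioi (0 : ℝ), log x * (x ^ (s - 1) * exp (-x / b))
      = (log b + digamma s) * (Gamma s * b ^ s) := by
  have hscale := integral_comp_mul_left_Ioi
    (fun x => log x * (x ^ (s - 1) * exp (-x / b))) 0 hb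
  rw [mul_zero, eq_inv_smul_iff₀ hb.ne', smul_eq_mul] at hscale
  -- `exp (-y / 1)` is kept so that the unit-scale (`b = 1`) lemmas apply verbatim.
  have hunscaled : ∀ y ∈ Ioi (0 : ℝ), log (b * y) * ((b * y) ^ (s - 1) * exp (-(b * y) / b))
      = b ^ (s - 1) *
        (log b * (y ^ (s - 1) * exp (-y / 1)) + log y * (y ^ (s - 1) * exp (-y / 1))) := by
    intro y (hy : 0 < y)
    rw [log_mul hb.ne' hy.ne', mul_rpow hb.le hy.le, neg_div, mul_div_cancel_left₀ _ hb.ne',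
      div_one]
    ring
  rw [← hscale, setIntegral_congr_fun measurableSet_Ioi hunscaled, integral_const_mul,
    integral_add ((integrableOn_rpow_mul_exp_neg_div_Ioi hs one_pos).const_mul _)
      (integrableOn_log_mul_rpow_mul_exp_neg_div_Ioi hs one_pos),
    integral_const_mul, integral_rpow_mul_exp_neg_div_Ioi hs one_pos]
  simp only [div_one, one_rpow, mul_one]
  rw [← Gamma_mul_digamma hs, ← mul_assoc, ← rpow_one_add' hb.le (by linarith), add_sub_cancel]
  ring

lemma klDiv_withDensity_ofReal {μ : Measure ℝ} [SigmaFinite μ] {p q : ℝ → ℝ}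
    (hp : Measurable p) (hq : Measurable q) (hp₀ : ∀ᵐ x ∂μ, 0 ≤ p x) (hq₀ : ∀ᵐ x ∂μ, 0 < q x) :
    klDiv (μ.withDensity fun x => ENNReal.ofReal (p x))
        (μ.withDensity fun x => ENNReal.ofReal (q x))
      = ∫ x, log (p x / q x) ∂μ.withDensity fun x => ENNReal.ofReal (p x) := by
  set Q := μ.withDensity fun x => ENNReal.ofReal (q x)
  have hratio : Measurable fun x => ENNReal.ofReal (p x / q x) := (hp.div hq).ennreal_ofReal
  have hPQ : (μ.withDensity fun x => ENNReal.ofReal (p x))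
      = Q.withDensity fun x => ENNReal.ofReal (p x / q x) := by
    rw [← withDensity_mul μ hq.ennreal_ofReal hratio]
    refine withDensity_congr_ae ?_
    filter_upwards [hp₀, hq₀] with x hpx hqx
    rw [Pi.mul_apply, ← ENNReal.ofReal_mul hqx.le, mul_div_cancel₀ _ hqx.ne']
  have hratio₀ : ∀ᵐ x ∂(μ.withDensity fun x => ENNReal.ofReal (p x)), 0 ≤ p x / q x :=
    (withDensity_absolutelyContinuous _ _).ae_le <| by
      filter_upwards [hp₀, hq₀] with x hpx hqx using div_nonneg hpx hqx.le
  have hrn := (withDensity_absolutelyContinuous Q (fun x => ENNReal.ofReal (p x / q x))).ae_le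
    (Measure.rnDeriv_withDensity Q hratio)
  rw [hPQ] at hratio₀ ⊢
  refine integral_congr_ae ?_
  filter_upwards [hrn, hratio₀] with x hx hx₀
  rw [hx, ENNReal.toReal_ofReal hx₀]

-- Off `(0, ∞)` this is junk (`Real.rpow` of a negative base); only its restriction to `Ioi 0`
-- is ever used.
noncomputable def gammaPdf (α β x : ℝ) : ℝ :=
  x ^ (α - 1) * exp (-x / β) / (Gamma α * β ^ α)

lemma measurable_gammaPdf (α β : ℝ) : Measurable (gammaPdf α β) := by
  unfold gammaPdf
  fun_prop

lemma gammaPdf_mul_self (α β : ℝ) {x : ℝ} (hx : 0 < x) :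
    gammaPdf α β x * x = x ^ (α + 1 - 1) * exp (-x / β) / (Gamma α * β ^ α) := by
  rw [gammaPdf, add_sub_cancel_right, rpow_sub_one hx.ne']
  field_simp

lemma gammaDist_eq_withDensity_restrict (α β : ℝ) :
    gammaDist α β
      = (volume.restrict (Ioi 0)).withDensity fun x => ENNReal.ofReal (gammaPdf α β x) := by
  rw [gammaDist, ← withDensity_indicator measurableSet_Ioi]
  congr with x
  by_cases hx : x ∈ Ioi (0 : ℝ) <;> simp [hx, gammaPdf]

lemma ae_pos_gammaDist (α β : ℝ) : ∀ᵐ x ∂gammaDist α β, 0 < x := by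
  rw [gammaDist_eq_withDensity_restrict]
  exact (withDensity_absolutelyContinuous _ _).ae_le (ae_restrict_mem measurableSet_Ioi)

section GammaDist

variable {α β : ℝ}

lemma gammaPdf_pos (hα : 0 < α) (hβ : 0 < β) {x : ℝ} (hx : 0 < x) : 0 < gammaPdf α β x := by
  unfold gammaPdf
  have := Gamma_pos_of_pos hα
  positivity

lemma log_gammaPdf (hα : 0 < α) (hβ : 0 < β) {x : ℝ} (hx : 0 < x) :
    log (gammaPdf α β x) = (α - 1) * log x - x / β - (log (Gamma α) + α * log β) := by
  have := Gamma_pos_of_pos hα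
  rw [gammaPdf, log_div (by positivity) (by positivity), log_mul (by positivity) (by positivity),
    log_mul (by positivity) (by positivity), log_rpow hx, log_rpow hβ, log_exp, neg_div]
  ring

lemma integrableOn_gammaPdf (hα : 0 < α) (hβ : 0 < β) : IntegrableOn (gammaPdf α β) (Ioi 0) :=
  (integrableOn_rpow_mul_exp_neg_div_Ioi hα hβ).div_const _

lemma integral_gammaPdf (hα : 0 < α) (hβ : 0 < β) : ∫ x in Ioi (0 : ℝ), gammaPdf α β x = 1 := by
  have := Gamma_pos_of_pos hα
  simp only [gammaPdf]
  rw [integral_div, integral_rpow_mul_exp_neg_div_Ioi hα hβ, div_self (by positivity)]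

lemma isProbabilityMeasure_gammaDist (hα : 0 < α) (hβ : 0 < β) :
    IsProbabilityMeasure (gammaDist α β) := by
  constructor
  rw [gammaDist_eq_withDensity_restrict, withDensity_apply _ MeasurableSet.univ,
    Measure.restrict_univ, ← ofReal_integral_eq_lintegral_ofReal (integrableOn_gammaPdf hα hβ)
      ((ae_restrict_mem measurableSet_Ioi).mono fun x hx => (gammaPdf_pos hα hβ hx).le),
    integral_gammaPdf hα hβ, ENNReal.ofReal_one]

lemma integral_gammaDist (hα : 0 < α) (hβ : 0 < β) (f : ℝ → ℝ) :
    ∫ x, f x ∂gammaDist α β = ∫ x in Ioi (0 : ℝ), gammaPdf α β x * f x := by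
  rw [gammaDist_eq_withDensity_restrict, integral_withDensity_eq_integral_toReal_smul
    (measurable_gammaPdf α β).ennreal_ofReal (ae_of_all _ fun _ => ENNReal.ofReal_lt_top)]
  refine setIntegral_congr_fun measurableSet_Ioi fun x hx => ?_
  rw [ENNReal.toReal_ofReal (gammaPdf_pos hα hβ hx).le, smul_eq_mul]

lemma integrable_gammaDist_iff (hα : 0 < α) (hβ : 0 < β) {f : ℝ → ℝ} :
    Integrable f (gammaDist α β) ↔ IntegrableOn (fun x => gammaPdf α β x * f x) (Ioi 0) := by
  rw [gammaDist_eq_withDensity_restrict, integrable_withDensity_iff_integrable_smul'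
    (measurable_gammaPdf α β).ennreal_ofReal (ae_of_all _ fun _ => ENNReal.ofReal_lt_top)]
  refine integrable_congr ((ae_restrict_mem measurableSet_Ioi).mono fun x hx => ?_)
  dsimp only
  rw [ENNReal.toReal_ofReal (gammaPdf_pos hα hβ hx).le, smul_eq_mul]

lemma integrable_id_gammaDist (hα : 0 < α) (hβ : 0 < β) : Integrable id (gammaDist α β) :=
  (integrable_gammaDist_iff hα hβ).2 <|
    IntegrableOn.congr_fun
      ((integrableOn_rpow_mul_exp_neg_div_Ioi (by linarith) hβ).div_const (Gamma α * β ^ α))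
      (fun _ hx => (gammaPdf_mul_self α β hx).symm) measurableSet_Ioi

lemma integral_id_gammaDist (hα : 0 < α) (hβ : 0 < β) : ∫ x, x ∂gammaDist α β = α * β := by
  have := Gamma_pos_of_pos hα
  rw [integral_gammaDist hα hβ, setIntegral_congr_fun measurableSet_Ioi
    fun _ hx => gammaPdf_mul_self α β hx, integral_div,
    integral_rpow_mul_exp_neg_div_Ioi (by linarith) hβ, Gamma_add_one hα.ne', rpow_add_one hβ.ne']
  field_simp

lemma integrable_log_gammaDist (hα : 0 < α) (hβ : 0 < β) : Integrable log (gammaDist α β) :=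
  (integrable_gammaDist_iff hα hβ).2 <|
    IntegrableOn.congr_fun
      ((integrableOn_log_mul_rpow_mul_exp_neg_div_Ioi hα hβ).div_const (Gamma α * β ^ α))
      (fun x _ => by rw [gammaPdf]; ring) measurableSet_Ioi

lemma integral_log_gammaDist (hα : 0 < α) (hβ : 0 < β) :
    ∫ x, log x ∂gammaDist α β = log β + digamma α := by
  have := Gamma_pos_of_pos hα
  rw [integral_gammaDist hα hβ, setIntegral_congr_fun measurableSet_Ioi (g := fun x =>
    log x * (x ^ (α - 1) * exp (-x / β)) / (Gamma α * β ^ α)) fun x _ => by rw [gammaPdf]; ring,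
    integral_div, integral_log_mul_rpow_mul_exp_neg_div_Ioi hα hβ]
  field_simp

end GammaDist

theorem klDiv_gamma_gamma (α₁ β₁ α₂ β₂ : ℝ) (hα₁ : 0 < α₁) (hβ₁ : 0 < β₁)
    (hα₂ : 0 < α₂) (hβ₂ : 0 < β₂) :
    klDiv (gammaDist α₁ β₁) (gammaDist α₂ β₂) =
      α₁ * (β₁ - β₂) / β₂ + α₂ * Real.log (β₂ / β₁)
        + Real.log (Real.Gamma α₂ / Real.Gamma α₁) + (α₁ - α₂) * digamma α₁ := by
  have := isProbabilityMeasure_gammaDist hα₁ hβ₁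
  have hlog_ratio : ∀ᵐ x ∂gammaDist α₁ β₁, log (gammaPdf α₁ β₁ x / gammaPdf α₂ β₂ x)
      = (α₁ - α₂) * log x + (β₂⁻¹ - β₁⁻¹) * x
        + (log (Gamma α₂) + α₂ * log β₂ - (log (Gamma α₁) + α₁ * log β₁)) := by
    filter_upwards [ae_pos_gammaDist α₁ β₁] with x hx
    rw [log_div (gammaPdf_pos hα₁ hβ₁ hx).ne' (gammaPdf_pos hα₂ hβ₂ hx).ne',
      log_gammaPdf hα₁ hβ₁ hx, log_gammaPdf hα₂ hβ₂ hx]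
    ring
  have hkl := klDiv_withDensity_ofReal (μ := volume.restrict (Ioi 0)) (measurable_gammaPdf α₁ β₁)
    (measurable_gammaPdf α₂ β₂)
    ((ae_restrict_mem measurableSet_Ioi).mono fun x hx => (gammaPdf_pos hα₁ hβ₁ hx).le)
    ((ae_restrict_mem measurableSet_Ioi).mono fun x hx => gammaPdf_pos hα₂ hβ₂ hx)
  simp only [← gammaDist_eq_withDensity_restrict] at hkl
  have hlog := (integrable_log_gammaDist hα₁ hβ₁).const_mul (α₁ - α₂)
  have hid := (integrable_id_gammaDist hα₁ hβ₁).const_mul (β₂⁻¹ - β₁⁻¹)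
  rw [hkl, integral_congr_ae hlog_ratio, integral_add, integral_add, integral_const_mul,
    integral_const_mul, integral_log_gammaDist hα₁ hβ₁,
    integral_id_gammaDist hα₁ hβ₁, integral_const, probReal_univ, one_smul,
    log_div hβ₂.ne' hβ₁.ne', log_div (Gamma_pos_of_pos hα₂).ne' (Gamma_pos_of_pos hα₁).ne']
  · field_simp
    ring
  · exact hlog
  · exact hid
  · exact hlog.add hid
  · exact integrable_const _
end

section
/- For every x > 0, the trigamma function ψ′ = (log Γ)″ satisfies 1/x + 1/(2x²) < ψ′(x) < 1/x + 1/x². -/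
/-!
On `(0, ∞)` the trigamma function is the series `ψ′(x) = ∑ₘ 1 / (x + m)²`: differentiate Gauss's
limit `log Γ(x) = lim (x log n + log n! - ∑_{m ≤ n} log (x + m))` once (the derivatives converge
uniformly on bounded intervals, to the series for the digamma function) and then the digamma
series term by term. Both bounds come from comparing this series termwise with the telescoping
series `∑ₘ (1 / (x + m) - 1 / (x + m + 1)) = 1 / x`: since `1/t - 1/(t+1) = 1 / (t (t+1))`, the
telescoping term lies strictly between `1 / (t + 1)²` and the mean of `1 / t²` and `1 / (t + 1)²`.
-/

open Real

/-- The trigamma function `ψ′ = (log Γ)″`. -/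
noncomputable def trigamma (x : ℝ) : ℝ :=
  deriv (deriv (fun y => Real.log (Real.Gamma y))) x

open Filter Topology Finset

lemma summable_inv_add_sq (a : ℝ) : Summable fun m : ℕ => ((a + m) ^ 2)⁻¹ := by
  refine ((summable_one_div_nat_add_rpow a 2).2 one_lt_two).congr fun m => ?_
  rw [rpow_two, sq_abs, one_div, add_comm]

lemma summable_inv_nat_add_one_sq : Summable fun m : ℕ => (((m : ℝ) + 1) ^ 2)⁻¹ := by
  simpa only [add_comm] using summable_inv_add_sq 1

lemma Antitone.hasSum_sub_succ {f : ℕ → ℝ} (hf : Antitone f) (hf0 : Tendsto f atTop (𝓝 0)) :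
    HasSum (fun n => f n - f (n + 1)) (f 0) := by
  rw [hasSum_iff_tendsto_nat_of_nonneg fun n => sub_nonneg.2 (hf n.le_succ)]
  simp_rw [sum_range_sub']
  simpa using tendsto_const_nhds.sub hf0

lemma hasSum_inv_sub_inv_add_one {x : ℝ} (hx : 0 < x) :
    HasSum (fun m : ℕ => (x + m)⁻¹ - (x + m + 1)⁻¹) x⁻¹ := by
  have hanti : Antitone fun m : ℕ => (x + m)⁻¹ := fun m n hmn =>
    inv_anti₀ (by positivity) (by gcongr)
  have hlim : Tendsto (fun m : ℕ => (x + m)⁻¹) atTop (𝓝 0) :=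
    (tendsto_atTop_add_const_left _ x tendsto_natCast_atTop_atTop).inv_tendsto_atTop
  simpa [add_assoc] using hanti.hasSum_sub_succ hlim

lemma hasSum_inv_add_one_sq (x : ℝ) :
    HasSum (fun m : ℕ => ((x + m + 1) ^ 2)⁻¹) (∑' m : ℕ, ((x + m) ^ 2)⁻¹ - (x ^ 2)⁻¹) := by
  simpa [add_assoc] using (hasSum_nat_add_iff' 1).2 (summable_inv_add_sq x).hasSum

lemma inv_sub_inv_add_one_eq_mul {t : ℝ} (ht : 0 < t) : t⁻¹ - (t + 1)⁻¹ = t⁻¹ * (t + 1)⁻¹ := by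
  rw [inv_sub_inv ht.ne' (by positivity), add_sub_cancel_left, one_div, mul_inv]

lemma inv_add_one_sq_lt_inv_sub_inv {t : ℝ} (ht : 0 < t) :
    ((t + 1) ^ 2)⁻¹ < t⁻¹ - (t + 1)⁻¹ := by
  rw [inv_sub_inv_add_one_eq_mul ht, sq, mul_inv]
  gcongr
  exact lt_add_one t

lemma two_mul_inv_sub_inv_lt {t : ℝ} (ht : 0 < t) :
    2 * (t⁻¹ - (t + 1)⁻¹) < (t ^ 2)⁻¹ + ((t + 1) ^ 2)⁻¹ := by
  have hsq : 0 < (t⁻¹ - (t + 1)⁻¹) ^ 2 :=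
    pow_pos (sub_pos.2 (inv_strictAnti₀ ht (lt_add_one t))) 2
  have hmul := inv_sub_inv_add_one_eq_mul ht
  rw [← inv_pow, ← inv_pow]
  nlinarith

lemma tsum_inv_add_sq_lt {x : ℝ} (hx : 0 < x) :
    ∑' m : ℕ, ((x + m) ^ 2)⁻¹ < x⁻¹ + (x ^ 2)⁻¹ := by
  have hlt (m : ℕ) := inv_add_one_sq_lt_inv_sub_inv (t := x + m) (by positivity)
  have := hasSum_lt (fun m => (hlt m).le) (hlt 0) (hasSum_inv_add_one_sq x)
    (hasSum_inv_sub_inv_add_one hx)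
  linarith

lemma lt_tsum_inv_add_sq {x : ℝ} (hx : 0 < x) :
    x⁻¹ + (2 * x ^ 2)⁻¹ < ∑' m : ℕ, ((x + m) ^ 2)⁻¹ := by
  have hlt (m : ℕ) := two_mul_inv_sub_inv_lt (t := x + m) (by positivity)
  have := hasSum_lt (fun m => (hlt m).le) (hlt 0) ((hasSum_inv_sub_inv_add_one hx).mul_left 2)
    ((summable_inv_add_sq x).hasSum.add (hasSum_inv_add_one_sq x))
  rw [mul_inv]
  linarith

lemma tendstoUniformlyOn_const_self {ι α β : Type*} [UniformSpace β] (f : α → β) (p : Filter ι)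
    (s : Set α) : TendstoUniformlyOn (fun _ => f) f p s :=
  fun _ hu => .of_forall fun _ _ _ => refl_mem_uniformity hu

noncomputable def digammaTerm (x : ℝ) (m : ℕ) : ℝ := (m + 1 : ℝ)⁻¹ - (x + m + 1)⁻¹

noncomputable def digammaSeries (x : ℝ) : ℝ :=
  -x⁻¹ - eulerMascheroniConstant + ∑' m : ℕ, digammaTerm x m

lemma digammaTerm_eq (x : ℝ) (m : ℕ) (hx : x + m + 1 ≠ 0) :
    digammaTerm x m = x * ((m + 1 : ℝ) * (x + m + 1))⁻¹ := by
  rw [digammaTerm, inv_sub_inv (by positivity) hx]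
  ring

lemma digammaTerm_nonneg {x : ℝ} (hx : 0 ≤ x) (m : ℕ) : 0 ≤ digammaTerm x m := by
  rw [digammaTerm_eq x m (by positivity)]
  positivity

lemma digammaTerm_le {x b : ℝ} (hx : 0 ≤ x) (hxb : x ≤ b) (m : ℕ) :
    digammaTerm x m ≤ b * ((m + 1 : ℝ) ^ 2)⁻¹ := by
  rw [digammaTerm_eq x m (by positivity), sq]
  gcongr <;> linarith

lemma summable_digammaTerm {x : ℝ} (hx : 0 ≤ x) : Summable (digammaTerm x) :=
  (summable_inv_nat_add_one_sq.mul_left x).of_nonneg_of_le (digammaTerm_nonneg hx)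
    (digammaTerm_le hx le_rfl)

lemma hasDerivAt_digammaTerm {x : ℝ} (m : ℕ) (hx : x + m + 1 ≠ 0) :
    HasDerivAt (digammaTerm · m) ((x + m + 1) ^ 2)⁻¹ x := by
  unfold digammaTerm
  simpa [neg_div] using
    ((((hasDerivAt_id x).add_const (m : ℝ)).add_const 1).inv hx).const_sub ((m : ℝ) + 1)⁻¹

lemma log_sub_sum_inv_eq (x : ℝ) (n : ℕ) :
    log n - ∑ m ∈ range (n + 1), (x + m)⁻¹
      = -x⁻¹ - (harmonic n - log n) + ∑ m ∈ range n, digammaTerm x m := by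
  simp only [digammaTerm, harmonic, sum_range_succ', sum_sub_distrib]
  push_cast
  simp only [add_zero, add_assoc]
  ring

lemma hasDerivAt_logGammaSeq {x : ℝ} (hx : 0 < x) (n : ℕ) :
    HasDerivAt (BohrMollerup.logGammaSeq · n)
      (-x⁻¹ - (harmonic n - log n) + ∑ m ∈ range n, digammaTerm x m) x := by
  rw [← log_sub_sum_inv_eq]
  refine ((hasDerivAt_mul_const _).add_const _).sub (HasDerivAt.fun_sum fun m _ => ?_)
  simpa [one_div] using ((hasDerivAt_id x).add_const (m : ℝ)).log (by positivity)

lemma tendstoUniformlyOn_digammaSeries (b : ℝ) :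
    TendstoUniformlyOn
      (fun n x => -x⁻¹ - (harmonic n - log n) + ∑ m ∈ range n, digammaTerm x m)
      digammaSeries atTop (Set.Ioo 0 b) := by
  refine ((tendstoUniformlyOn_const_self _ _ _).sub
    (tendsto_harmonic_sub_log.tendstoUniformlyOn_const _)).add
    (tendstoUniformlyOn_tsum_nat (summable_inv_nat_add_one_sq.mul_left b) fun m x hx => ?_)
  rw [norm_of_nonneg (digammaTerm_nonneg hx.1.le m)]
  exact digammaTerm_le hx.1.le hx.2.le m

lemma hasDerivAt_log_Gamma {x : ℝ} (hx : 0 < x) :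
    HasDerivAt (fun y => log (Gamma y)) (digammaSeries x) x :=
  hasDerivAt_of_tendstoUniformlyOn isOpen_Ioo (tendstoUniformlyOn_digammaSeries (x + 1))
    (.of_forall fun n _ hy => hasDerivAt_logGammaSeq hy.1 n)
    (fun _ hy => BohrMollerup.tendsto_log_gamma hy.1) ⟨hx, lt_add_one x⟩

lemma hasDerivAt_digammaSeries {x : ℝ} (hx : 0 < x) :
    HasDerivAt digammaSeries (∑' m : ℕ, ((x + m) ^ 2)⁻¹) x := by
  have hsum : HasDerivAt (fun y => ∑' m : ℕ, digammaTerm y m) (∑' m : ℕ, ((x + m + 1) ^ 2)⁻¹) x :=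
    hasDerivAt_tsum_of_isPreconnected summable_inv_nat_add_one_sq isOpen_Ioi
      isPreconnected_Ioi (fun m y (hy : 0 < y) => hasDerivAt_digammaTerm m (by positivity))
      (fun m y (hy : 0 < y) => by
        rw [norm_of_nonneg (by positivity)]
        gcongr
        linarith)
      hx (summable_digammaTerm hx.le) hx
  have hinv : HasDerivAt (fun y => -y⁻¹ - eulerMascheroniConstant) (x ^ 2)⁻¹ x := by
    simpa using (hasDerivAt_inv hx.ne').neg.sub_const eulerMascheroniConstant
  refine (hinv.add hsum).congr_deriv ?_
  rw [(hasSum_inv_add_one_sq x).tsum_eq]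
  ring

lemma trigamma_eq_tsum {x : ℝ} (hx : 0 < x) : trigamma x = ∑' m : ℕ, ((x + m) ^ 2)⁻¹ := by
  have hderiv : deriv (fun y => log (Gamma y)) =ᶠ[𝓝 x] digammaSeries :=
    (eventually_gt_nhds hx).mono fun y hy => (hasDerivAt_log_Gamma hy).deriv
  rw [trigamma, hderiv.deriv_eq, (hasDerivAt_digammaSeries hx).deriv]

theorem trigamma_bounds (x : ℝ) (hx : 0 < x) :
    1 / x + 1 / (2 * x ^ 2) < trigamma x ∧ trigamma x < 1 / x + 1 / x ^ 2 := by
  simp only [one_div, trigamma_eq_tsum hx]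
  exact ⟨lt_tsum_inv_add_sq hx, tsum_inv_add_sq_lt hx⟩
end

section
/- Let f : [0,1] → ℝ be continuous, and for i ∈ ℕ and 1 ≤ j ≤ 2^i let θ_{i,j} = ∫₀¹ f·ψ_{i,j} be its Haar wavelet coefficients. Fix k ∈ ℕ and t ∈ (0,1], and let I_k(t) = ((j−1)/2^k, j/2^k] be the dyadic interval of length 2^{−k} containing t. If Σ_{i≥k} 2^{i/2}·max_{1≤j≤2^i} |θ_{i,j}| < ∞, then |f(t) − 2^k ∫_{I_k(t)} f(x) dx| ≤ Σ_{i=k}^∞ 2^{i/2}·max_{1≤j≤2^i} |θ_{i,j}|. -/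
open MeasureTheory Real Set intervalIntegral

/-- The Haar wavelet `ψ_{i,j}` on `[0,1]`, for `i ∈ ℕ` and `j = 1, …, 2^i`. -/
noncomputable def haar (i j : ℕ) (x : ℝ) : ℝ :=
  if ((j : ℝ) - 1) / 2 ^ i < x ∧ x ≤ ((j : ℝ) - 1 / 2) / 2 ^ i then (2 : ℝ) ^ ((i : ℝ) / 2)
  else if ((j : ℝ) - 1 / 2) / 2 ^ i < x ∧ x ≤ (j : ℝ) / 2 ^ i then -((2 : ℝ) ^ ((i : ℝ) / 2))
  else 0

/-- The Haar wavelet coefficient `θ_{i,j} = ∫₀¹ f ψ_{i,j}`. -/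
noncomputable def haarCoef (f : ℝ → ℝ) (i j : ℕ) : ℝ :=
  ∫ x in (0 : ℝ)..1, f x * haar i j x

/-- `max_{1 ≤ j ≤ 2^i} |θ_{i,j}|`. -/
noncomputable def maxAbsCoef (f : ℝ → ℝ) (i : ℕ) : ℝ :=
  (Finset.Icc 1 (2 ^ i)).sup' (Finset.nonempty_Icc.mpr Nat.one_le_two_pow)
    fun j => |haarCoef f i j|

/-!
Let `A_n(t)` be the average of `f` over the dyadic interval of level `n` containing `t`. The
interval of level `n + 1` containing `t` is one of the two halves of that of level `n`, and the
average over a half differs from the average over the whole by `±2^{n/2} θ_{n,j}`, since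
`θ_{n,j}` is `2^{n/2}` times the difference of the integrals of `f` over the two halves. Hence
`|A_{n+1}(t) - A_n(t)| ≤ 2^{n/2} max_j |θ_{n,j}|`, while `A_n(t) → f(t)` by continuity; summing
the telescoping differences from `n = k` gives the bound.
-/

open Filter Topology

noncomputable def dyadicAverage (f : ℝ → ℝ) (n j : ℕ) : ℝ :=
  2 ^ n * ∫ x in ((j : ℝ) - 1) / 2 ^ n..(j : ℝ) / 2 ^ n, f x

noncomputable def dyadicIndex (t : ℝ) (n : ℕ) : ℕ := ⌈t * 2 ^ n⌉₊

section DyadicIndex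

variable {t : ℝ} {n : ℕ}

lemma dyadicIndex_eq {j : ℕ} (ht : 0 < t)
    (htj : ((j : ℝ) - 1) / 2 ^ n < t ∧ t ≤ (j : ℝ) / 2 ^ n) : dyadicIndex t n = j := by
  rw [div_lt_iff₀ (by positivity), le_div_iff₀ (by positivity)] at htj
  have hj : j ≠ 0 := Nat.pos_iff_ne_zero.1 <| by
    exact_mod_cast (mul_pos ht (by positivity : (0 : ℝ) < 2 ^ n)).trans_le htj.2
  rw [dyadicIndex, Nat.ceil_eq_iff hj, Nat.cast_sub (Nat.one_le_iff_ne_zero.2 hj)]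
  exact_mod_cast htj

lemma sub_one_div_lt_of_dyadicIndex (ht : 0 ≤ t) :
    ((dyadicIndex t n : ℝ) - 1) / 2 ^ n < t := by
  rw [div_lt_iff₀ (by positivity), sub_lt_iff_lt_add]
  exact Nat.ceil_lt_add_one (by positivity)

lemma le_dyadicIndex_div : t ≤ (dyadicIndex t n : ℝ) / 2 ^ n := by
  rw [le_div_iff₀ (by positivity)]
  exact Nat.le_ceil _

lemma one_le_dyadicIndex (ht : 0 < t) : 1 ≤ dyadicIndex t n :=
  Nat.one_le_iff_ne_zero.2 (Nat.ceil_pos.2 (by positivity)).ne'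

lemma dyadicIndex_le (ht : t ≤ 1) : dyadicIndex t n ≤ 2 ^ n := by
  rw [dyadicIndex, Nat.ceil_le]
  push_cast
  exact mul_le_of_le_one_left (by positivity) ht

lemma dyadicIndex_succ (ht : 0 ≤ t) :
    dyadicIndex t (n + 1) = 2 * dyadicIndex t n - 1 ∨
      dyadicIndex t (n + 1) = 2 * dyadicIndex t n := by
  have hx : 0 ≤ t * 2 ^ n := by positivity
  have h2x : t * 2 ^ (n + 1) = 2 * (t * 2 ^ n) := by ring
  have upper : dyadicIndex t (n + 1) ≤ 2 * dyadicIndex t n := by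
    rw [dyadicIndex, dyadicIndex, Nat.ceil_le, h2x]
    push_cast
    linarith [Nat.le_ceil (t * 2 ^ n)]
  have lower : 2 * dyadicIndex t n < dyadicIndex t (n + 1) + 2 := by
    have := Nat.ceil_lt_add_one hx
    have := Nat.le_ceil (t * 2 ^ (n + 1))
    rw [dyadicIndex, dyadicIndex]
    exact_mod_cast (by linarith : (2 * ⌈t * 2 ^ n⌉₊ : ℝ) < ⌈t * 2 ^ (n + 1)⌉₊ + 2)
  omega

end DyadicIndex

lemma integral_indicator_Ioc_of_le {E : Type*} [NormedAddCommGroup E] [NormedSpace ℝ E]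
    {μ : Measure ℝ} {f : ℝ → E} {a b u v : ℝ} (hau : a ≤ u) (huv : u ≤ v) (hvb : v ≤ b) :
    ∫ x in a..b, (Ioc u v).indicator f x ∂μ = ∫ x in u..v, f x ∂μ := by
  rw [integral_of_le (hau.trans (huv.trans hvb)), integral_of_le huv,
    setIntegral_indicator measurableSet_Ioc,
    inter_eq_right.2 (Ioc_subset_Ioc hau hvb)]

lemma IntervalIntegrable.mono_set_of_le {E : Type*} [NormedAddCommGroup E] {μ : Measure ℝ}
    {f : ℝ → E} {a b c d : ℝ} (hf : IntervalIntegrable f μ a b) (hac : a ≤ c) (hcd : c ≤ d)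
    (hdb : d ≤ b) : IntervalIntegrable f μ c d :=
  hf.mono_set (uIcc_subset_uIcc (mem_uIcc_of_le hac (hcd.trans hdb))
    (mem_uIcc_of_le (hac.trans hcd) hdb))

lemma mul_haar_eq (f : ℝ → ℝ) (i j : ℕ) (x : ℝ) :
    f x * haar i j x = 2 ^ ((i : ℝ) / 2) *
      ((Ioc (((j : ℝ) - 1) / 2 ^ i) (((j : ℝ) - 1 / 2) / 2 ^ i)).indicator f x -
        (Ioc (((j : ℝ) - 1 / 2) / 2 ^ i) ((j : ℝ) / 2 ^ i)).indicator f x) := by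
  simp only [haar, indicator, mem_Ioc]
  split_ifs <;> grind

section Haar

variable {f : ℝ → ℝ} {n j : ℕ}

lemma zero_le_dyadic_points_le_one (hj1 : 1 ≤ j) (hj2 : j ≤ 2 ^ n) :
    0 ≤ ((j : ℝ) - 1) / 2 ^ n ∧ ((j : ℝ) - 1) / 2 ^ n ≤ ((j : ℝ) - 1 / 2) / 2 ^ n ∧
      ((j : ℝ) - 1 / 2) / 2 ^ n ≤ (j : ℝ) / 2 ^ n ∧ (j : ℝ) / 2 ^ n ≤ 1 := by
  have hj1' : (1 : ℝ) ≤ j := by exact_mod_cast hj1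
  have hj2' : (j : ℝ) ≤ 2 ^ n := by exact_mod_cast hj2
  refine ⟨by positivity, by gcongr; norm_num, by gcongr; norm_num, ?_⟩
  rwa [div_le_one (by positivity)]

lemma haarCoef_eq (hf : IntervalIntegrable f volume 0 1) (hj1 : 1 ≤ j) (hj2 : j ≤ 2 ^ n) :
    haarCoef f n j = 2 ^ ((n : ℝ) / 2) *
      ((∫ x in ((j : ℝ) - 1) / 2 ^ n..((j : ℝ) - 1 / 2) / 2 ^ n, f x) -
        ∫ x in ((j : ℝ) - 1 / 2) / 2 ^ n..(j : ℝ) / 2 ^ n, f x) := by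
  obtain ⟨h0a, ham, hmb, hb1⟩ := zero_le_dyadic_points_le_one hj1 hj2
  have hind : ∀ u v : ℝ, IntervalIntegrable ((Ioc u v).indicator f) volume 0 1 := fun u v => by
    rw [intervalIntegrable_iff_integrableOn_Ioc_of_le zero_le_one] at hf ⊢
    exact hf.indicator measurableSet_Ioc
  simp_rw [haarCoef, mul_haar_eq, intervalIntegral.integral_const_mul,
    integral_sub (hind _ _) (hind _ _), integral_indicator_Ioc_of_le h0a ham (hmb.trans hb1),
    integral_indicator_Ioc_of_le (h0a.trans ham) hmb hb1]

lemma dyadicAverage_eq_add (hf : IntervalIntegrable f volume 0 1) (hj1 : 1 ≤ j)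
    (hj2 : j ≤ 2 ^ n) :
    dyadicAverage f n j = 2 ^ n *
      ((∫ x in ((j : ℝ) - 1) / 2 ^ n..((j : ℝ) - 1 / 2) / 2 ^ n, f x) +
        ∫ x in ((j : ℝ) - 1 / 2) / 2 ^ n..(j : ℝ) / 2 ^ n, f x) := by
  obtain ⟨h0a, ham, hmb, hb1⟩ := zero_le_dyadic_points_le_one hj1 hj2
  rw [dyadicAverage, integral_add_adjacent_intervals
    (hf.mono_set_of_le h0a ham (hmb.trans hb1)) (hf.mono_set_of_le (h0a.trans ham) hmb hb1)]

lemma dyadicAverage_two_mul_sub_one (hj1 : 1 ≤ j) :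
    dyadicAverage f (n + 1) (2 * j - 1) =
      2 ^ (n + 1) * ∫ x in ((j : ℝ) - 1) / 2 ^ n..((j : ℝ) - 1 / 2) / 2 ^ n, f x := by
  rw [dyadicAverage, Nat.cast_sub (by omega)]
  congr 2 <;> · push_cast; field_simp; ring

lemma dyadicAverage_two_mul :
    dyadicAverage f (n + 1) (2 * j) =
      2 ^ (n + 1) * ∫ x in ((j : ℝ) - 1 / 2) / 2 ^ n..(j : ℝ) / 2 ^ n, f x := by
  rw [dyadicAverage]
  congr 2 <;> · push_cast; field_simp; ring

end Haar

lemma abs_dyadicAverage_child_sub {f : ℝ → ℝ} {n j c : ℕ} (hf : IntervalIntegrable f volume 0 1)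
    (hj1 : 1 ≤ j) (hj2 : j ≤ 2 ^ n) (hc : c = 2 * j - 1 ∨ c = 2 * j) :
    |dyadicAverage f (n + 1) c - dyadicAverage f n j| = 2 ^ ((n : ℝ) / 2) * |haarCoef f n j| := by
  have hsq : (2 : ℝ) ^ ((n : ℝ) / 2) * 2 ^ ((n : ℝ) / 2) = 2 ^ n := by
    rw [← rpow_add two_pos, add_halves, rpow_natCast]
  rw [haarCoef_eq hf hj1 hj2, abs_mul, abs_of_pos (rpow_pos_of_pos two_pos _), ← mul_assoc, hsq,
    dyadicAverage_eq_add hf hj1 hj2]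
  have h2n : (0 : ℝ) < 2 ^ n := by positivity
  have halves : ∀ L R : ℝ, |2 ^ (n + 1) * L - 2 ^ n * (L + R)| = 2 ^ n * |L - R| ∧
      |2 ^ (n + 1) * R - 2 ^ n * (L + R)| = 2 ^ n * |L - R| := fun L R => by
    rw [show 2 ^ (n + 1) * L - 2 ^ n * (L + R) = 2 ^ n * (L - R) by ring,
      show 2 ^ (n + 1) * R - 2 ^ n * (L + R) = -(2 ^ n * (L - R)) by ring,
      abs_neg, abs_mul, abs_of_pos h2n]
    exact ⟨rfl, rfl⟩
  rcases hc with rfl | rfl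
  · rw [dyadicAverage_two_mul_sub_one hj1]
    exact (halves _ _).1
  · rw [dyadicAverage_two_mul]
    exact (halves _ _).2

lemma dist_dyadicAverage_succ_le {f : ℝ → ℝ} {t : ℝ} (hf : IntervalIntegrable f volume 0 1)
    (ht : t ∈ Ioc 0 1) (n : ℕ) :
    dist (dyadicAverage f n (dyadicIndex t n))
        (dyadicAverage f (n + 1) (dyadicIndex t (n + 1))) ≤
      2 ^ ((n : ℝ) / 2) * maxAbsCoef f n := by
  have hj1 : 1 ≤ dyadicIndex t n := one_le_dyadicIndex ht.1
  have hj2 : dyadicIndex t n ≤ 2 ^ n := dyadicIndex_le ht.2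
  rw [dist_comm, Real.dist_eq, abs_dyadicAverage_child_sub hf hj1 hj2 (dyadicIndex_succ ht.1.le)]
  gcongr
  exact Finset.le_sup' (fun j => |haarCoef f n j|) (Finset.mem_Icc.2 ⟨hj1, hj2⟩)

lemma abs_dyadicAverage_sub_le {f : ℝ → ℝ} {n j : ℕ} {c ε : ℝ}
    (hf : IntervalIntegrable f volume (((j : ℝ) - 1) / 2 ^ n) ((j : ℝ) / 2 ^ n))
    (h : ∀ x ∈ Ioc (((j : ℝ) - 1) / 2 ^ n) ((j : ℝ) / 2 ^ n), |f x - c| ≤ ε) :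
    |dyadicAverage f n j - c| ≤ ε := by
  have hlen : (j : ℝ) / 2 ^ n - ((j : ℝ) - 1) / 2 ^ n = (2 ^ n)⁻¹ := by ring
  have hle : ((j : ℝ) - 1) / 2 ^ n ≤ (j : ℝ) / 2 ^ n := by
    gcongr
    exact sub_le_self _ zero_le_one
  have hint := norm_integral_le_of_norm_le_const (a := ((j : ℝ) - 1) / 2 ^ n)
    (b := (j : ℝ) / 2 ^ n) (f := fun x => f x - c) (by rwa [uIoc_of_le hle])
  rw [abs_of_nonneg (by linarith), hlen] at hint
  have key : dyadicAverage f n j - c = 2 ^ n * ∫ x in ((j : ℝ) - 1) / 2 ^ n..(j : ℝ) / 2 ^ n,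
      (f x - c) := by
    rw [dyadicAverage, integral_sub hf intervalIntegrable_const,
      intervalIntegral.integral_const, hlen, smul_eq_mul]
    field_simp
  rw [key, abs_mul, abs_of_pos (by positivity)]
  calc 2 ^ n * |∫ x in ((j : ℝ) - 1) / 2 ^ n..(j : ℝ) / 2 ^ n, (f x - c)|
      ≤ 2 ^ n * (ε * (2 ^ n)⁻¹) := by gcongr; exact hint
    _ = ε := by field_simp

lemma tendsto_dyadicAverage {f : ℝ → ℝ} {t : ℝ} (hf : IntervalIntegrable f volume 0 1)
    (hft : ContinuousWithinAt f (Icc 0 1) t) (ht : t ∈ Ioc 0 1) :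
    Tendsto (fun n => dyadicAverage f n (dyadicIndex t n)) atTop (𝓝 (f t)) := by
  rw [Metric.tendsto_atTop]
  intro ε hε
  obtain ⟨δ, hδ, hfδ⟩ := Metric.continuousWithinAt_iff.1 hft (ε / 2) (half_pos hε)
  obtain ⟨N, hN⟩ := exists_pow_lt_of_lt_one hδ one_half_lt_one
  refine ⟨N, fun n hn => ?_⟩
  obtain ⟨h0a, ham, hmb, hb1⟩ :=
    zero_le_dyadic_points_le_one (one_le_dyadicIndex ht.1 (n := n)) (dyadicIndex_le ht.2)
  have hat := sub_one_div_lt_of_dyadicIndex ht.1.le (n := n)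
  have htb := le_dyadicIndex_div (t := t) (n := n)
  have hlen : (dyadicIndex t n : ℝ) / 2 ^ n - ((dyadicIndex t n : ℝ) - 1) / 2 ^ n < δ :=
    calc _ = (1 / 2 : ℝ) ^ n := by rw [div_pow, one_pow]; ring
      _ ≤ (1 / 2) ^ N := pow_le_pow_of_le_one (by norm_num) (by norm_num) hn
      _ < δ := hN
  refine lt_of_le_of_lt ?_ (half_lt_self hε)
  refine abs_dyadicAverage_sub_le (hf.mono_set_of_le h0a (ham.trans hmb) hb1) fun x hx => ?_
  refine (hfδ ⟨h0a.trans hx.1.le, hx.2.trans hb1⟩ ?_).le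
  rw [Real.dist_eq, abs_sub_lt_iff]
  constructor <;> linarith [hx.1, hx.2]

theorem abs_sub_dyadic_average_le_general (f : ℝ → ℝ) (hf : ContinuousOn f (Set.Icc 0 1))
    (k : ℕ) (t : ℝ) (ht : 0 < t ∧ t ≤ 1) (j : ℕ)
    (htj : ((j : ℝ) - 1) / 2 ^ k < t ∧ t ≤ (j : ℝ) / 2 ^ k)
    (hsum : Summable fun i : ℕ =>
      (2 : ℝ) ^ (((k + i : ℕ) : ℝ) / 2) * maxAbsCoef f (k + i)) :
    |f t - 2 ^ k * ∫ x in (((j : ℝ) - 1) / 2 ^ k)..((j : ℝ) / 2 ^ k), f x| ≤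
      ∑' i : ℕ, (2 : ℝ) ^ (((k + i : ℕ) : ℝ) / 2) * maxAbsCoef f (k + i) := by
  have hfi : IntervalIntegrable f volume 0 1 := hf.intervalIntegrable_of_Icc zero_le_one
  have hlim : Tendsto (fun i => dyadicAverage f (k + i) (dyadicIndex t (k + i))) atTop
      (𝓝 (f t)) :=
    (tendsto_dyadicAverage hfi (hf t ⟨ht.1.le, ht.2⟩) ht).comp
      (tendsto_atTop_mono (fun i => Nat.le_add_left i k) tendsto_id)
  have hdist := dist_le_tsum_of_dist_le_of_tendsto₀ _
    (fun i => dist_dyadicAverage_succ_le hfi ht (k + i)) hsum hlim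
  rwa [add_zero, dyadicIndex_eq ht.1 htj, dist_comm, Real.dist_eq] at hdist

theorem abs_sub_dyadic_average_le (f : ℝ → ℝ) (hf : ContinuousOn f (Set.Icc 0 1))
    (k : ℕ) (t : ℝ) (ht : 0 < t ∧ t ≤ 1) (j : ℕ) (hj : 1 ≤ j ∧ j ≤ 2 ^ k)
    (htj : ((j : ℝ) - 1) / 2 ^ k < t ∧ t ≤ (j : ℝ) / 2 ^ k)
    (hsum : Summable fun i : ℕ =>
      (2 : ℝ) ^ (((k + i : ℕ) : ℝ) / 2) * maxAbsCoef f (k + i)) :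
    |f t - 2 ^ k * ∫ x in (((j : ℝ) - 1) / 2 ^ k)..((j : ℝ) / 2 ^ k), f x| ≤
      ∑' i : ℕ, (2 : ℝ) ^ (((k + i : ℕ) : ℝ) / 2) * maxAbsCoef f (k + i) :=
  abs_sub_dyadic_average_le_general f hf k t ht j htj hsum
end

section
/- Let M > 0, α₁ > 1, and let τ : ℝ → ℝ be differentiable on [0,1] with |τ′(t)| ≤ M for all t ∈ [0,1] and |τ′(t) − τ′(s)| ≤ M·|t − s|^{α₁−1} for all t, s ∈ [0,1]. For an integer m ≥ 3 define the local averages a_ℓ = m·∫_{(ℓ−1)/m}^{ℓ/m} τ(t) dt for ℓ = 1, …, m. Then for every ℓ with 2 ≤ ℓ ≤ m − 1, the second difference satisfies |a_{ℓ+1} − 2a_ℓ + a_{ℓ−1}| ≤ 5M·m^{−α₁}. -/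
open MeasureTheory Real Set intervalIntegral

/-!
With `h = 1/m`, shifting the three cells onto one shows that the second difference of the local
averages is `m ∫ (τ (t + h) - 2 τ t + τ (t - h)) dt` over a single cell of length `h`. The
integrand is the increment of `τ - τ (· - h)` over `[t, t + h]`, whose derivative
`τ' s - τ' (s - h)` is at most `M h ^ (α₁ - 1)` by the Hölder condition; the mean value
inequality bounds it by `M h ^ α₁`, and integrating and multiplying by `m` gives `M m ^ (-α₁)`.
-/

theorem abs_second_diff_le_of_abs_deriv_sub_le {f : ℝ → ℝ} {t h K : ℝ} (hh : 0 ≤ h)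
    (hdiff : ∀ x ∈ Icc (t - h) (t + h), DifferentiableAt ℝ f x)
    (hbound : ∀ x ∈ Ico t (t + h), |deriv f x - deriv f (x - h)| ≤ K) :
    |f (t + h) - 2 * f t + f (t - h)| ≤ K * h := by
  have hderiv : ∀ x ∈ Icc t (t + h), HasDerivWithinAt (fun y => f y - f (y - h))
      (deriv f x - deriv f (x - h)) (Icc t (t + h)) x := by
    intro x hx
    have h₁ := (hdiff x ⟨by linarith [hx.1], hx.2⟩).hasDerivAt
    have h₂ := (hdiff (x - h) ⟨by linarith [hx.1], by linarith [hx.2]⟩).hasDerivAt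
    exact (h₁.sub (h₂.comp_sub_const x h)).hasDerivWithinAt
  have := norm_image_sub_le_of_norm_deriv_le_segment' hderiv hbound
    (t + h) (right_mem_Icc.2 (by linarith))
  rw [Real.norm_eq_abs, add_sub_cancel_left, add_sub_cancel_right] at this
  convert this using 2
  ring

theorem second_diff_integral_eq {f : ℝ → ℝ} {u h : ℝ} (hh : 0 ≤ h)
    (hf : ContinuousOn f (Icc (u - h) (u + 2 * h))) :
    (∫ t in (u + h)..(u + 2 * h), f t) - 2 * (∫ t in u..(u + h), f t) + ∫ t in (u - h)..u, f t
      = ∫ t in u..(u + h), (f (t + h) - 2 * f t + f (t - h)) := by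
  have hint : ∀ c ∈ Icc (-h) h, IntervalIntegrable (fun t => f (t + c)) volume u (u + h) := by
    intro c hc
    refine ContinuousOn.intervalIntegrable_of_Icc (by linarith) ?_
    refine hf.comp (continuous_add_const c).continuousOn fun x hx => ?_
    constructor <;> linarith [hx.1, hx.2, hc.1, hc.2]
  have hright := hint h ⟨by linarith, le_rfl⟩
  have hmid := hint 0 ⟨by linarith, hh⟩
  have hleft := hint (-h) ⟨le_rfl, by linarith⟩
  simp only [add_zero, ← sub_eq_add_neg] at hmid hleft
  rw [integral_add (hright.sub (hmid.const_mul 2)) hleft, integral_sub hright (hmid.const_mul 2),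
    intervalIntegral.integral_const_mul, integral_comp_add_right, integral_comp_sub_right,
    show u + h + h = u + 2 * h by ring, add_sub_cancel_right]

theorem abs_second_diff_integral_le {f : ℝ → ℝ} {u h K : ℝ} (hh : 0 ≤ h)
    (hf : ContinuousOn f (Icc (u - h) (u + 2 * h)))
    (hbound : ∀ t ∈ Icc u (u + h), |f (t + h) - 2 * f t + f (t - h)| ≤ K) :
    |(∫ t in (u + h)..(u + 2 * h), f t) - 2 * (∫ t in u..(u + h), f t) + ∫ t in (u - h)..u, f t|
      ≤ K * h := by
  rw [second_diff_integral_eq hh hf, ← Real.norm_eq_abs]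
  have hu : u ≤ u + h := by linarith
  have := norm_integral_le_of_norm_le_const (a := u) (b := u + h) (C := K)
    (f := fun t => f (t + h) - 2 * f t + f (t - h)) fun t ht =>
    hbound t (Ioc_subset_Icc_self (uIoc_of_le hu ▸ ht))
  rwa [add_sub_cancel_left, abs_of_nonneg hh] at this

theorem abs_second_diff_integral_le_of_holder_deriv {f : ℝ → ℝ} {u h M β : ℝ} (hh : 0 < h)
    (hdiff : ∀ x ∈ Icc (u - h) (u + 2 * h), DifferentiableAt ℝ f x)
    (hholder : ∀ x ∈ Icc (u - h) (u + 2 * h), ∀ y ∈ Icc (u - h) (u + 2 * h),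
      |deriv f x - deriv f y| ≤ M * |x - y| ^ β) :
    |(∫ t in (u + h)..(u + 2 * h), f t) - 2 * (∫ t in u..(u + h), f t) + ∫ t in (u - h)..u, f t|
      ≤ M * h ^ β * h * h := by
  refine abs_second_diff_integral_le hh.le
    (fun t ht => (hdiff t ht).continuousAt.continuousWithinAt) fun t ht => ?_
  refine abs_second_diff_le_of_abs_deriv_sub_le hh.le
    (fun x hx => hdiff x ⟨by linarith [hx.1, ht.1], by linarith [hx.2, ht.2]⟩) fun x hx => ?_
  simpa only [sub_sub_cancel, abs_of_pos hh] using
    hholder x ⟨by linarith [hx.1, ht.1], by linarith [hx.2, ht.2]⟩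
      (x - h) ⟨by linarith [hx.1, ht.1], by linarith [hx.2, ht.2]⟩

theorem second_difference_of_local_averages_le_general (M α₁ : ℝ) (hM : 0 < M)
    (τ : ℝ → ℝ) (hdiff : ∀ t ∈ Set.Icc (0 : ℝ) 1, DifferentiableAt ℝ τ t)
    (hholder : ∀ t ∈ Set.Icc (0 : ℝ) 1, ∀ s ∈ Set.Icc (0 : ℝ) 1,
      |deriv τ t - deriv τ s| ≤ M * |t - s| ^ (α₁ - 1))
    (m : ℕ) (a : ℕ → ℝ)
    (ha : ∀ ℓ, a ℓ = m * ∫ t in (((ℓ : ℝ) - 1) / m)..((ℓ : ℝ) / m), τ t)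
    (ℓ : ℕ) (hℓ : 2 ≤ ℓ) (hℓm : ℓ + 1 ≤ m) :
    |a (ℓ + 1) - 2 * a ℓ + a (ℓ - 1)| ≤ 5 * M * (m : ℝ) ^ (-α₁) := by
  have hℓ' : (2 : ℝ) ≤ ℓ := by exact_mod_cast hℓ
  have hℓm' : (ℓ : ℝ) + 1 ≤ m := by exact_mod_cast hℓm
  have hm0 : (0 : ℝ) < m := by linarith
  set h : ℝ := (m : ℝ)⁻¹ with h_def
  have hh : 0 < h := by positivity
  have hmh : (m : ℝ) * h = 1 := mul_inv_cancel₀ hm0.ne'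
  set u : ℝ := ((ℓ : ℝ) - 1) * h
  have hsub : Icc (u - h) (u + 2 * h) ⊆ Icc 0 1 := Icc_subset_Icc (by nlinarith) (by nlinarith)
  simp only [div_eq_mul_inv] at ha
  have hsum : a (ℓ + 1) - 2 * a ℓ + a (ℓ - 1) = m * ((∫ t in (u + h)..(u + 2 * h), τ t)
      - 2 * (∫ t in u..(u + h), τ t) + ∫ t in (u - h)..u, τ t) := by
    rw [ha, ha, ha, Nat.cast_sub (by omega : 1 ≤ ℓ)]
    push_cast
    simp only [u, h]
    ring_nf
  calc |a (ℓ + 1) - 2 * a ℓ + a (ℓ - 1)|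
      ≤ m * (M * h ^ (α₁ - 1) * h * h) := by
        rw [hsum, abs_mul, abs_of_pos hm0]
        gcongr
        exact abs_second_diff_integral_le_of_holder_deriv hh (fun x hx => hdiff x (hsub hx))
          fun x hx y hy => hholder x (hsub hx) y (hsub hy)
    _ = M * h ^ α₁ * ((m : ℝ) * h) := by
        rw [rpow_sub_one hh.ne']
        field_simp
    _ = M * (m : ℝ) ^ (-α₁) := by
        rw [hmh, mul_one, h_def, inv_rpow hm0.le, rpow_neg hm0.le]
    _ ≤ 5 * M * (m : ℝ) ^ (-α₁) := by
        have : 0 < (m : ℝ) ^ (-α₁) := by positivity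
        nlinarith

theorem second_difference_of_local_averages_le (M α₁ : ℝ) (hM : 0 < M) (hα₁ : 1 < α₁)
    (τ : ℝ → ℝ) (hdiff : ∀ t ∈ Set.Icc (0 : ℝ) 1, DifferentiableAt ℝ τ t)
    (hbd : ∀ t ∈ Set.Icc (0 : ℝ) 1, |deriv τ t| ≤ M)
    (hholder : ∀ t ∈ Set.Icc (0 : ℝ) 1, ∀ s ∈ Set.Icc (0 : ℝ) 1,
      |deriv τ t - deriv τ s| ≤ M * |t - s| ^ (α₁ - 1))
    (m : ℕ) (hm : 3 ≤ m) (a : ℕ → ℝ)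
    (ha : ∀ ℓ, a ℓ = m * ∫ t in (((ℓ : ℝ) - 1) / m)..((ℓ : ℝ) / m), τ t)
    (ℓ : ℕ) (hℓ : 2 ≤ ℓ) (hℓm : ℓ + 1 ≤ m) :
    |a (ℓ + 1) - 2 * a ℓ + a (ℓ - 1)| ≤ 5 * M * (m : ℝ) ^ (-α₁) :=
  second_difference_of_local_averages_le_general M α₁ hM τ hdiff hholder m a ha ℓ hℓ hℓm
end

section
/- Let M > 0, α₁ > 1, and let τ : ℝ → ℝ be differentiable on [0,1] with |τ′(t)| ≤ M for all t ∈ [0,1] and |τ′(t) − τ′(s)| ≤ M·|t − s|^{α₁−1} for all t, s ∈ [0,1]. For an integer m ≥ 2, set t_ℓ* = (2ℓ−1)/(2m) and a_ℓ = m·∫_{(ℓ−1)/m}^{ℓ/m} τ(t) dt for ℓ = 1, …, m, and define the piecewise-linear interpolant τ̂ : [0,1] → ℝ by τ̂(t) = a₁ for t ∈ [0, t₁*], τ̂(t) = a_m for t ∈ [t_m*, 1], and τ̂(t) = m(t_{ℓ+1}* − t)·a_ℓ + m(t − t_ℓ*)·a_{ℓ+1} for t ∈ [t_ℓ*, t_{ℓ+1}*].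 Then (i) |τ̂(t) − τ(t)| ≤ 2M·m^{−α₁} for every t ∈ [t₁*, t_m*], and (ii) ∫₀¹ (τ̂(t) − τ(t))² dt ≤ 4M²·m^{−2α₁} + M²·m^{−3}. -/
/-!
On the cell `[(ℓ - 1)/m, ℓ/m]` the average `a ℓ` is within `M (2m)^(-α₁)` of `τ` at the midpoint
`t_ℓ*`: compare `τ` with its tangent line at `t_ℓ*`, whose linear part integrates to zero over
the cell, and use the Hölder Taylor bound `|τ y - τ x - τ' x (y - x)| ≤ M |y - x|^α₁`.
Between two consecutive midpoints the interpolant is a convex combination of two such averages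
with weights balanced around `t`, so the first-order Taylor terms at `t` cancel and the error is
at most `2 M m^(-α₁)`. On the two end pieces, of total length `1/m`, the interpolant is a single
average, within `M/m` of `τ` by the mean value theorem; integrating the squares gives (ii).
-/

open MeasureTheory Real Set intervalIntegral

theorem abs_sub_sub_deriv_mul_le_of_holder {f : ℝ → ℝ} {s : Set ℝ} {M α x y : ℝ}
    (hs : Convex ℝ s) (hf : ∀ z ∈ s, DifferentiableAt ℝ f z) (hM : 0 ≤ M) (hα : 1 ≤ α)
    (hholder : ∀ z ∈ s, ∀ w ∈ s, |deriv f z - deriv f w| ≤ M * |z - w| ^ (α - 1))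
    (hx : x ∈ s) (hy : y ∈ s) :
    |f y - f x - deriv f x * (y - x)| ≤ M * |y - x| ^ α := by
  have hseg : uIcc x y ⊆ s := hs.ordConnected.uIcc_subset hx hy
  have hderiv : ∀ z ∈ uIcc x y,
      HasDerivWithinAt (fun u => f u - deriv f x * u) (deriv f z - deriv f x) (uIcc x y) z :=
    fun z hz => by
      simpa using ((hf z (hseg hz)).hasDerivAt.fun_sub
        ((hasDerivAt_id z).const_mul (deriv f x))).hasDerivWithinAt
  have hbound : ∀ z ∈ uIcc x y, ‖deriv f z - deriv f x‖ ≤ M * |y - x| ^ (α - 1) :=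
    fun z hz => (hholder z (hseg hz) x hx).trans <| by
      have := abs_sub_left_of_mem_uIcc hz
      gcongr
  have hmvt := convex_uIcc x y |>.norm_image_sub_le_of_norm_hasDerivWithin_le hderiv hbound
    left_mem_uIcc right_mem_uIcc
  have hpow : |y - x| ^ (α - 1) * |y - x| = |y - x| ^ α := by
    rw [← rpow_add_one' (abs_nonneg _) (by linarith), sub_add_cancel]
  rw [Real.norm_eq_abs, Real.norm_eq_abs, mul_assoc, hpow] at hmvt
  convert hmvt using 2
  ring

theorem rpow_le_rpow_neg_of_le_inv {x y α : ℝ} (hx : 0 ≤ x) (hy : 0 ≤ y) (hxy : x ≤ y⁻¹)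
    (hα : 0 ≤ α) : x ^ α ≤ y ^ (-α) := by
  rw [rpow_neg hy, ← inv_rpow hy]
  exact rpow_le_rpow hx hxy hα

theorem abs_inv_mul_integral_sub_le {f : ℝ → ℝ} {p q y K : ℝ} (hpq : p < q)
    (hf : IntervalIntegrable f volume p q) (h : ∀ x ∈ Icc p q, |f x - y| ≤ K) :
    |(q - p)⁻¹ * (∫ x in p..q, f x) - y| ≤ K := by
  have hqp : 0 < q - p := sub_pos.2 hpq
  have hint : ‖∫ x in p..q, (f x - y)‖ ≤ K * |q - p| :=
    norm_integral_le_of_norm_le_const fun x hx => by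
      rw [uIoc_of_le hpq.le] at hx
      exact h x (Ioc_subset_Icc_self hx)
  rw [integral_sub hf intervalIntegrable_const, intervalIntegral.integral_const, smul_eq_mul,
    Real.norm_eq_abs, abs_of_pos hqp] at hint
  calc |(q - p)⁻¹ * (∫ x in p..q, f x) - y|
      = (q - p)⁻¹ * |(∫ x in p..q, f x) - (q - p) * y| := by
        rw [← abs_of_pos (inv_pos.2 hqp), ← abs_mul, abs_of_pos (inv_pos.2 hqp)]
        congr 1
        field_simp
    _ ≤ (q - p)⁻¹ * (K * (q - p)) := by gcongr
    _ = K := by field_simp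

theorem integral_sub_midpoint_eq_zero (p q : ℝ) : ∫ x in p..q, (x - (p + q) / 2) = 0 := by
  rw [integral_sub intervalIntegrable_id intervalIntegrable_const, integral_id,
    intervalIntegral.integral_const, smul_eq_mul]
  ring

theorem abs_inv_mul_integral_sub_midpoint_le {f : ℝ → ℝ} {p q c K : ℝ} (hpq : p < q)
    (hf : IntervalIntegrable f volume p q)
    (h : ∀ x ∈ Icc p q, |f x - f ((p + q) / 2) - c * (x - (p + q) / 2)| ≤ K) :
    |(q - p)⁻¹ * (∫ x in p..q, f x) - f ((p + q) / 2)| ≤ K := by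
  have hlin : IntervalIntegrable (fun x => c * (x - (p + q) / 2)) volume p q :=
    (continuous_const.mul (continuous_id.sub continuous_const)).intervalIntegrable p q
  have key := abs_inv_mul_integral_sub_le hpq (hf.sub hlin) (y := f ((p + q) / 2))
    fun x hx => by simpa only [sub_right_comm] using h x hx
  rwa [integral_sub hf hlin, intervalIntegral.integral_const_mul, integral_sub_midpoint_eq_zero,
    mul_zero, sub_zero] at key

theorem abs_inv_mul_integral_sub_midpoint_le_of_holder {f : ℝ → ℝ} {s : Set ℝ} {M α p q : ℝ}
    (hs : Convex ℝ s) (hf : ∀ z ∈ s, DifferentiableAt ℝ f z) (hM : 0 ≤ M) (hα : 1 ≤ α)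
    (hholder : ∀ z ∈ s, ∀ w ∈ s, |deriv f z - deriv f w| ≤ M * |z - w| ^ (α - 1))
    (hpq : p < q) (hsub : Icc p q ⊆ s) :
    |(q - p)⁻¹ * (∫ x in p..q, f x) - f ((p + q) / 2)| ≤ M * ((q - p) / 2) ^ α := by
  have hint : IntervalIntegrable f volume p q :=
    ContinuousOn.intervalIntegrable_of_Icc hpq.le fun x hx =>
      (hf x (hsub hx)).continuousAt.continuousWithinAt
  have hmid : (p + q) / 2 ∈ Icc p q := ⟨by linarith, by linarith⟩
  refine abs_inv_mul_integral_sub_midpoint_le hpq hint (c := deriv f ((p + q) / 2)) fun x hx =>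
    (abs_sub_sub_deriv_mul_le_of_holder hs hf hM hα hholder (hsub hmid) (hsub hx)).trans ?_
  have hdist : |x - (p + q) / 2| ≤ (q - p) / 2 := abs_le.2 ⟨by linarith [hx.1], by linarith [hx.2]⟩
  gcongr

theorem abs_inv_mul_integral_sub_le_of_abs_deriv_le {f : ℝ → ℝ} {s : Set ℝ} {M p q t : ℝ}
    (hs : Convex ℝ s) (hf : ∀ z ∈ s, DifferentiableAt ℝ f z) (hbd : ∀ z ∈ s, |deriv f z| ≤ M)
    (hpq : p < q) (hsub : Icc p q ⊆ s) (ht : t ∈ Icc p q) :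
    |(q - p)⁻¹ * (∫ x in p..q, f x) - f t| ≤ M * (q - p) := by
  have hint : IntervalIntegrable f volume p q :=
    ContinuousOn.intervalIntegrable_of_Icc hpq.le fun x hx =>
      (hf x (hsub hx)).continuousAt.continuousWithinAt
  have hM : 0 ≤ M := (abs_nonneg _).trans (hbd t (hsub ht))
  refine abs_inv_mul_integral_sub_le hpq hint fun x hx => ?_
  have hlip := hs.norm_image_sub_le_of_norm_deriv_le hf hbd (hsub ht) (hsub hx)
  rw [Real.norm_eq_abs, Real.norm_eq_abs] at hlip
  have hdist : |x - t| ≤ q - p := abs_le.2 ⟨by linarith [hx.1, ht.2], by linarith [hx.2, ht.1]⟩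
  exact hlip.trans (by gcongr)

theorem abs_mul_add_mul_sub_le {f : ℝ → ℝ} {w₀ w₁ P Q t y₀ y₁ c ε δ : ℝ}
    (hw₀ : 0 ≤ w₀) (hw₁ : 0 ≤ w₁) (hsum : w₀ + w₁ = 1) (hbal : w₀ * (P - t) + w₁ * (Q - t) = 0)
    (h₀ : |y₀ - f P| ≤ ε) (h₁ : |y₁ - f Q| ≤ ε)
    (hP : |f P - f t - c * (P - t)| ≤ δ) (hQ : |f Q - f t - c * (Q - t)| ≤ δ) :
    |w₀ * y₀ + w₁ * y₁ - f t| ≤ ε + δ := by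
  have hsplit : w₀ * y₀ + w₁ * y₁ - f t = w₀ * (y₀ - f P) + w₁ * (y₁ - f Q) +
      (w₀ * (f P - f t - c * (P - t)) + w₁ * (f Q - f t - c * (Q - t))) := by
    linear_combination f t * hsum + c * hbal
  calc |w₀ * y₀ + w₁ * y₁ - f t|
      ≤ w₀ * |y₀ - f P| + w₁ * |y₁ - f Q| +
          (w₀ * |f P - f t - c * (P - t)| + w₁ * |f Q - f t - c * (Q - t)|) := by
        rw [hsplit]
        refine (abs_add_le _ _).trans (add_le_add ((abs_add_le _ _).trans ?_)
          ((abs_add_le _ _).trans ?_)) <;>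
          simp only [abs_mul, abs_of_nonneg hw₀, abs_of_nonneg hw₁, le_refl]
    _ ≤ w₀ * ε + w₁ * ε + (w₀ * δ + w₁ * δ) := by gcongr
    _ = ε + δ := by linear_combination (ε + δ) * hsum

theorem exists_mem_Icc_succ_of_mem_Icc {α : Type*} [LinearOrder α] {u : ℕ → α} {i j : ℕ}
    (hij : i < j) {t : α} (ht : t ∈ Icc (u i) (u j)) :
    ∃ ℓ, i ≤ ℓ ∧ ℓ < j ∧ t ∈ Icc (u ℓ) (u (ℓ + 1)) := by
  induction j, hij using Nat.le_induction with
  | base => exact ⟨i, le_rfl, i.lt_succ_self, ht⟩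
  | succ j hij ih =>
    rcases le_or_gt t (u j) with htj | htj
    · obtain ⟨ℓ, hiℓ, hℓj, htℓ⟩ := ih ⟨ht.1, htj⟩
      exact ⟨ℓ, hiℓ, hℓj.trans j.lt_succ_self, htℓ⟩
    · exact ⟨j, by omega, j.lt_succ_self, htj.le, ht.2⟩

theorem intervalIntegrable_of_continuousOn_Icc_succ {f : ℝ → ℝ} {u : ℕ → ℝ} {i j : ℕ}
    (hij : i ≤ j) (hu : Monotone u)
    (hf : ∀ k, i ≤ k → k < j → ContinuousOn f (Icc (u k) (u (k + 1)))) :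
    IntervalIntegrable f volume (u i) (u j) :=
  IntervalIntegrable.trans_iterate_Ico hij fun k hk =>
    (hf k hk.1 hk.2).intervalIntegrable_of_Icc (hu k.le_succ)

theorem integral_sq_le_of_abs_le {g : ℝ → ℝ} {a b K : ℝ} (hab : a ≤ b)
    (h : ∀ x ∈ Icc a b, |g x| ≤ K) : ∫ x in a..b, g x ^ 2 ≤ K ^ 2 * (b - a) := by
  have hint : ‖∫ x in a..b, g x ^ 2‖ ≤ K ^ 2 * |b - a| :=
    norm_integral_le_of_norm_le_const fun x hx => by
      rw [uIoc_of_le hab] at hx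
      rw [Real.norm_eq_abs, abs_pow]
      exact pow_le_pow_left₀ (abs_nonneg _) (h x (Ioc_subset_Icc_self hx)) 2
  rw [abs_of_nonneg (sub_nonneg.2 hab)] at hint
  exact (le_abs_self _).trans hint

theorem integral_sq_le_add_add_of_abs_le {g : ℝ → ℝ} {a b c d K₁ K₂ K₃ : ℝ}
    (hab : a ≤ b) (hbc : b ≤ c) (hcd : c ≤ d)
    (hi₁ : IntervalIntegrable (fun x => g x ^ 2) volume a b)
    (hi₂ : IntervalIntegrable (fun x => g x ^ 2) volume b c)
    (hi₃ : IntervalIntegrable (fun x => g x ^ 2) volume c d)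
    (h₁ : ∀ x ∈ Icc a b, |g x| ≤ K₁) (h₂ : ∀ x ∈ Icc b c, |g x| ≤ K₂)
    (h₃ : ∀ x ∈ Icc c d, |g x| ≤ K₃) :
    ∫ x in a..d, g x ^ 2 ≤ K₁ ^ 2 * (b - a) + K₂ ^ 2 * (c - b) + K₃ ^ 2 * (d - c) := by
  rw [← integral_add_adjacent_intervals (hi₁.trans hi₂) hi₃,
    ← integral_add_adjacent_intervals hi₁ hi₂]
  gcongr
  · exact integral_sq_le_of_abs_le hab h₁
  · exact integral_sq_le_of_abs_le hbc h₂
  · exact integral_sq_le_of_abs_le hcd h₃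

-- `cellAverage τ m ℓ` and `cellMidpoint m ℓ` are the `a_ℓ` and `t_ℓ*` of the statement.
noncomputable def cellAverage (f : ℝ → ℝ) (m ℓ : ℕ) : ℝ :=
  m * ∫ t in ((ℓ : ℝ) - 1) / m..(ℓ : ℝ) / m, f t

noncomputable def cellMidpoint (m ℓ : ℕ) : ℝ := (2 * (ℓ : ℝ) - 1) / (2 * m)

section Cells

variable {m ℓ : ℕ}

theorem cell_width : (ℓ : ℝ) / m - ((ℓ : ℝ) - 1) / m = (m : ℝ)⁻¹ := by
  rw [← sub_div, sub_sub_cancel, one_div]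

theorem cell_subset_Icc (h1 : 1 ≤ ℓ) (hℓ : ℓ ≤ m) :
    Icc (((ℓ : ℝ) - 1) / m) ((ℓ : ℝ) / m) ⊆ Icc 0 1 := by
  have h1' : (1 : ℝ) ≤ ℓ := by exact_mod_cast h1
  have hℓ' : (ℓ : ℝ) ≤ m := by exact_mod_cast hℓ
  exact Icc_subset_Icc (div_nonneg (by linarith) (by linarith)) ((div_le_one (by linarith)).2 hℓ')

theorem cellMidpoint_eq : cellMidpoint m ℓ = (((ℓ : ℝ) - 1) / m + (ℓ : ℝ) / m) / 2 := by
  rw [cellMidpoint]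
  ring

theorem cellMidpoint_succ_sub : cellMidpoint m (ℓ + 1) - cellMidpoint m ℓ = (m : ℝ)⁻¹ := by
  rw [cellMidpoint, cellMidpoint]
  push_cast
  ring

theorem cellMidpoint_mono : Monotone (cellMidpoint m) := fun k ℓ hkℓ => by
  rw [cellMidpoint, cellMidpoint]
  gcongr

theorem cellMidpoint_mem_cell (hm : m ≠ 0) :
    cellMidpoint m ℓ ∈ Icc (((ℓ : ℝ) - 1) / m) ((ℓ : ℝ) / m) := by
  have hm' : (0 : ℝ) < m := by positivity
  rw [cellMidpoint_eq]
  constructor <;> linarith [div_lt_div_of_pos_right (sub_one_lt (ℓ : ℝ)) hm']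

theorem cellMidpoint_mem_Icc (h1 : 1 ≤ ℓ) (hℓ : ℓ ≤ m) : cellMidpoint m ℓ ∈ Icc 0 1 :=
  cell_subset_Icc h1 hℓ (cellMidpoint_mem_cell (by omega))

theorem integral_sq_le_of_abs_le_on_cells {g : ℝ → ℝ} {K₁ K₂ : ℝ} (hm : m ≠ 0)
    (hi₁ : IntervalIntegrable (fun x => g x ^ 2) volume 0 (cellMidpoint m 1))
    (hi₂ : IntervalIntegrable (fun x => g x ^ 2) volume (cellMidpoint m 1) (cellMidpoint m m))
    (hi₃ : IntervalIntegrable (fun x => g x ^ 2) volume (cellMidpoint m m) 1)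
    (h₁ : ∀ x ∈ Icc 0 (cellMidpoint m 1), |g x| ≤ K₁)
    (h₂ : ∀ x ∈ Icc (cellMidpoint m 1) (cellMidpoint m m), |g x| ≤ K₂)
    (h₃ : ∀ x ∈ Icc (cellMidpoint m m) 1, |g x| ≤ K₁) :
    ∫ x in (0 : ℝ)..1, g x ^ 2 ≤ K₂ ^ 2 + K₁ ^ 2 / m := by
  have hfirst := cellMidpoint_mem_Icc le_rfl (Nat.one_le_iff_ne_zero.2 hm)
  have hlast := cellMidpoint_mem_Icc (Nat.one_le_iff_ne_zero.2 hm) le_rfl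
  have hends : cellMidpoint m 1 - 0 + (1 - cellMidpoint m m) = (m : ℝ)⁻¹ := by
    simp only [cellMidpoint]
    field_simp
    ring
  calc ∫ x in (0 : ℝ)..1, g x ^ 2
      ≤ K₁ ^ 2 * (cellMidpoint m 1 - 0) + K₂ ^ 2 * (cellMidpoint m m - cellMidpoint m 1) +
          K₁ ^ 2 * (1 - cellMidpoint m m) :=
        integral_sq_le_add_add_of_abs_le hfirst.1 (cellMidpoint_mono (Nat.one_le_iff_ne_zero.2 hm))
          hlast.2 hi₁ hi₂ hi₃ h₁ h₂ h₃
    _ = K₂ ^ 2 * (cellMidpoint m m - cellMidpoint m 1) + K₁ ^ 2 / m := by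
        rw [div_eq_mul_inv, ← hends]
        ring
    _ ≤ K₂ ^ 2 * 1 + K₁ ^ 2 / m := by
        gcongr
        linarith [hfirst.1, hlast.2]
    _ = K₂ ^ 2 + K₁ ^ 2 / m := by rw [mul_one]

end Cells

section HolderDerivative

variable {τ : ℝ → ℝ} {M α : ℝ} {m ℓ : ℕ}

theorem abs_cellAverage_sub_cellMidpoint_le
    (hdiff : ∀ t ∈ Icc (0 : ℝ) 1, DifferentiableAt ℝ τ t) (hM : 0 ≤ M) (hα : 1 ≤ α)
    (hholder : ∀ t ∈ Icc (0 : ℝ) 1, ∀ s ∈ Icc (0 : ℝ) 1,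
      |deriv τ t - deriv τ s| ≤ M * |t - s| ^ (α - 1))
    (h1 : 1 ≤ ℓ) (hℓ : ℓ ≤ m) :
    |cellAverage τ m ℓ - τ (cellMidpoint m ℓ)| ≤ M * (m : ℝ) ^ (-α) := by
  have hm : (0 : ℝ) < m := by norm_cast; omega
  have key := abs_inv_mul_integral_sub_midpoint_le_of_holder (convex_Icc 0 1) hdiff hM hα
    hholder (div_lt_div_of_pos_right (sub_one_lt (ℓ : ℝ)) hm) (cell_subset_Icc h1 hℓ)
  rw [cell_width, inv_inv, ← cellMidpoint_eq] at key
  refine key.trans (mul_le_mul_of_nonneg_left (rpow_le_rpow_neg_of_le_inv (by positivity)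
    hm.le ?_ (by linarith)) hM)
  linarith [inv_pos.2 hm]

theorem abs_cellAverage_sub_le
    (hdiff : ∀ t ∈ Icc (0 : ℝ) 1, DifferentiableAt ℝ τ t)
    (hbd : ∀ t ∈ Icc (0 : ℝ) 1, |deriv τ t| ≤ M)
    (h1 : 1 ≤ ℓ) (hℓ : ℓ ≤ m) {t : ℝ} (ht : t ∈ Icc (((ℓ : ℝ) - 1) / m) ((ℓ : ℝ) / m)) :
    |cellAverage τ m ℓ - τ t| ≤ M / m := by
  have hm : (0 : ℝ) < m := by norm_cast; omega
  have key := abs_inv_mul_integral_sub_le_of_abs_deriv_le (convex_Icc 0 1) hdiff hbd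
    (div_lt_div_of_pos_right (sub_one_lt (ℓ : ℝ)) hm) (cell_subset_Icc h1 hℓ) ht
  rwa [cell_width, inv_inv, ← div_eq_mul_inv] at key

theorem abs_interpolant_sub_le
    (hdiff : ∀ t ∈ Icc (0 : ℝ) 1, DifferentiableAt ℝ τ t) (hM : 0 ≤ M) (hα : 1 ≤ α)
    (hholder : ∀ t ∈ Icc (0 : ℝ) 1, ∀ s ∈ Icc (0 : ℝ) 1,
      |deriv τ t - deriv τ s| ≤ M * |t - s| ^ (α - 1))
    (h1 : 1 ≤ ℓ) (hℓ : ℓ + 1 ≤ m) {t : ℝ}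
    (ht : t ∈ Icc (cellMidpoint m ℓ) (cellMidpoint m (ℓ + 1))) :
    |m * (cellMidpoint m (ℓ + 1) - t) * cellAverage τ m ℓ +
        m * (t - cellMidpoint m ℓ) * cellAverage τ m (ℓ + 1) - τ t| ≤
      2 * M * (m : ℝ) ^ (-α) := by
  have hm : (0 : ℝ) < m := by norm_cast; omega
  have hstep : cellMidpoint m (ℓ + 1) - cellMidpoint m ℓ = (m : ℝ)⁻¹ := cellMidpoint_succ_sub
  have hP := cellMidpoint_mem_Icc h1 (m := m) (by omega)
  have hQ := cellMidpoint_mem_Icc (ℓ := ℓ + 1) (by omega) hℓ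
  have ht01 : t ∈ Icc (0 : ℝ) 1 := ⟨hP.1.trans ht.1, ht.2.trans hQ.2⟩
  have htaylor : ∀ x ∈ Icc (cellMidpoint m ℓ) (cellMidpoint m (ℓ + 1)),
      |τ x - τ t - deriv τ t * (x - t)| ≤ M * (m : ℝ) ^ (-α) := fun x hx => by
    have hx01 : x ∈ Icc (0 : ℝ) 1 := ⟨hP.1.trans hx.1, hx.2.trans hQ.2⟩
    have hdist : |x - t| ≤ (m : ℝ)⁻¹ :=
      abs_le.2 ⟨by linarith [hx.1, ht.2], by linarith [hx.2, ht.1]⟩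
    refine (abs_sub_sub_deriv_mul_le_of_holder (convex_Icc 0 1) hdiff hM hα hholder ht01
      hx01).trans (mul_le_mul_of_nonneg_left ?_ hM)
    exact rpow_le_rpow_neg_of_le_inv (abs_nonneg _) hm.le hdist (by linarith)
  rw [show 2 * M * (m : ℝ) ^ (-α) = M * (m : ℝ) ^ (-α) + M * (m : ℝ) ^ (-α) by ring]
  refine abs_mul_add_mul_sub_le (mul_nonneg hm.le (sub_nonneg.2 ht.2))
    (mul_nonneg hm.le (sub_nonneg.2 ht.1)) ?_ (by ring)
    (abs_cellAverage_sub_cellMidpoint_le hdiff hM hα hholder h1 (by omega))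
    (abs_cellAverage_sub_cellMidpoint_le hdiff hM hα hholder (by omega) hℓ)
    (htaylor _ (left_mem_Icc.2 (ht.1.trans ht.2))) (htaylor _ (right_mem_Icc.2 (ht.1.trans ht.2)))
  rw [← mul_add, sub_add_sub_cancel, hstep, mul_inv_cancel₀ hm.ne']

end HolderDerivative

theorem piecewise_linear_interpolant_error (M α₁ : ℝ) (hM : 0 < M) (hα₁ : 1 < α₁)
    (τ : ℝ → ℝ) (hdiff : ∀ t ∈ Set.Icc (0 : ℝ) 1, DifferentiableAt ℝ τ t)
    (hbd : ∀ t ∈ Set.Icc (0 : ℝ) 1, |deriv τ t| ≤ M)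
    (hholder : ∀ t ∈ Set.Icc (0 : ℝ) 1, ∀ s ∈ Set.Icc (0 : ℝ) 1,
      |deriv τ t - deriv τ s| ≤ M * |t - s| ^ (α₁ - 1))
    (m : ℕ) (hm : 2 ≤ m) (tstar : ℕ → ℝ) (a : ℕ → ℝ)
    (htstar : ∀ ℓ, tstar ℓ = (2 * (ℓ : ℝ) - 1) / (2 * m))
    (ha : ∀ ℓ, a ℓ = m * ∫ t in (((ℓ : ℝ) - 1) / m)..((ℓ : ℝ) / m), τ t)
    (τhat : ℝ → ℝ)
    (hτhat₁ : ∀ t ∈ Set.Icc (0 : ℝ) (tstar 1), τhat t = a 1)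
    (hτhat₂ : ∀ t ∈ Set.Icc (tstar m) 1, τhat t = a m)
    (hτhat₃ : ∀ ℓ : ℕ, 1 ≤ ℓ → ℓ + 1 ≤ m → ∀ t ∈ Set.Icc (tstar ℓ) (tstar (ℓ + 1)),
      τhat t = m * (tstar (ℓ + 1) - t) * a ℓ + m * (t - tstar ℓ) * a (ℓ + 1)) :
    (∀ t ∈ Set.Icc (tstar 1) (tstar m), |τhat t - τ t| ≤ 2 * M * (m : ℝ) ^ (-α₁)) ∧
      (∫ t in (0 : ℝ)..1, (τhat t - τ t) ^ 2) ≤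
        4 * M ^ 2 * (m : ℝ) ^ (-(2 * α₁)) + M ^ 2 / (m : ℝ) ^ 3 := by
  obtain rfl : tstar = cellMidpoint m := funext htstar
  obtain rfl : a = cellAverage τ m := funext ha
  have hm0 : m ≠ 0 := by omega
  have hfirst := cellMidpoint_mem_Icc le_rfl (by omega : 1 ≤ m)
  have hlast := cellMidpoint_mem_Icc (by omega : 1 ≤ m) le_rfl
  have hinner : ∀ t ∈ Icc (cellMidpoint m 1) (cellMidpoint m m),
      |τhat t - τ t| ≤ 2 * M * (m : ℝ) ^ (-α₁) := fun t ht => by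
    obtain ⟨ℓ, h1, hℓ, htℓ⟩ := exists_mem_Icc_succ_of_mem_Icc (by omega) ht
    rw [hτhat₃ ℓ h1 hℓ t htℓ]
    exact abs_interpolant_sub_le hdiff hM.le hα₁.le hholder h1 hℓ htℓ
  have hleft : ∀ t ∈ Icc 0 (cellMidpoint m 1), |τhat t - τ t| ≤ M / m := fun t ht => by
    rw [hτhat₁ t ht]
    exact abs_cellAverage_sub_le hdiff hbd le_rfl (by omega)
      (Icc_subset_Icc (by simp) (cellMidpoint_mem_cell hm0).2 ht)
  have hright : ∀ t ∈ Icc (cellMidpoint m m) 1, |τhat t - τ t| ≤ M / m := fun t ht => by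
    rw [hτhat₂ t ht]
    exact abs_cellAverage_sub_le hdiff hbd (by omega) le_rfl
      (Icc_subset_Icc (cellMidpoint_mem_cell hm0).1 (by simp [hm0]) ht)
  have hτ : ContinuousOn τ (Icc 0 1) := fun t ht => (hdiff t ht).continuousAt.continuousWithinAt
  have hsq : ∀ s ⊆ Icc 0 1, ContinuousOn τhat s →
      ContinuousOn (fun t => (τhat t - τ t) ^ 2) s := fun s hs hτhat =>
    (hτhat.sub (hτ.mono hs)).pow 2
  have hint₁ := (hsq _ (Icc_subset_Icc le_rfl hfirst.2) (continuousOn_const.congr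
    fun t ht => hτhat₁ t ht)).intervalIntegrable_of_Icc (μ := volume) hfirst.1
  have hint₃ := (hsq _ (Icc_subset_Icc hlast.1 le_rfl) (continuousOn_const.congr
    fun t ht => hτhat₂ t ht)).intervalIntegrable_of_Icc (μ := volume) hlast.2
  have hint₂ := intervalIntegrable_of_continuousOn_Icc_succ (by omega) cellMidpoint_mono
    fun ℓ h1 hℓ => hsq _ (Icc_subset_Icc (cellMidpoint_mem_Icc h1 (by omega)).1
      (cellMidpoint_mem_Icc (by omega) hℓ).2) ((by fun_prop : Continuous fun t =>
        m * (cellMidpoint m (ℓ + 1) - t) * cellAverage τ m ℓ +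
          m * (t - cellMidpoint m ℓ) * cellAverage τ m (ℓ + 1)).continuousOn.congr
      fun t ht => hτhat₃ ℓ h1 hℓ t ht)
  refine ⟨hinner, (integral_sq_le_of_abs_le_on_cells hm0 hint₁ hint₂ hint₃ hleft hinner
    hright).trans (le_of_eq ?_)⟩
  rw [mul_pow, ← rpow_mul_natCast (Nat.cast_nonneg m)]
  push_cast
  ring_nf
end
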